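/- Let y₁ be a solution of equation (2.1) on [t₀, τ₀), and let η : [t₀, τ₀) → ℝ be differentiable with η′(t) + a(t)η(t)³ + b(t)η(t)² + c(t)η(t) + d(t) ≤ 0 for all t ∈ [t₀, τ₀) and η(t₀) ≤ y₁(t₀). Assume: (I) a(t) < 0 for almost every t ∈ [t₀, τ₀) and b²/a is locally integrable on [t₀, τ₀); (II) there exists γ ∈ [η(t₀), y₁(t₀)] such that for all t ∈ [t₀, τ₀), γ − y₁(t₀) + ∫_{t₀}^{t} exp(∫_{t₀}^{τ} [c(s) − b(s)²/a(s)] ds)·[(a₁(τ) − a(τ))y₁(τ)³ + (b₁(τ) − b(τ))y₁(τ)² + (c₁(τ) − c(τ))y₁(τ) + d₁(τ) − d(τ)] dτ ≤ 0. Then every noncontinuable solution y of (1.1) with y(t₀) ∈ [η(t₀), γ] is defined on all of [t₀, τ₀) and satisfies η(t) ≤ y(t) ≤ y₁(t) for all t ∈ [t₀, τ₀). Furthermore, if η(t₀) < y(t₀) then η(t) < y(t) on [t₀, τ₀), and if y(t₀) < y₁(t₀) then y(t) < y₁(t) on [t₀, τ₀). -/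

import Mathlib

open Set MeasureTheory intervalIntegral

/-- The right-hand side `-(a y³ + b y² + c y + d)` of the Abel equation (1.1). -/
noncomputable def abelRHS (a b c d y : ℝ → ℝ) (t : ℝ) : ℝ :=
  -(a t * y t ^ 3 + b t * y t ^ 2 + c t * y t + d t)

/-- `y` is a solution of the Abel equation `y' + a y³ + b y² + c y + d = 0` on the set `S`. -/
def IsAbelSolOn (a b c d y : ℝ → ℝ) (S : Set ℝ) : Prop :=
  ∀ t ∈ S, HasDerivWithinAt y (abelRHS a b c d y t) S t

/-- The set of real points of the interval `[t₀, τ)`, `τ` an extended real. -/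
def eIco (t₀ : ℝ) (τ : EReal) : Set ℝ := {t : ℝ | t₀ ≤ t ∧ (t : EReal) < τ}

/-- A solution `y` of the Abel equation on `[t₀, t₁) ⊆ [t₀, τ₀)` is noncontinuable if it
cannot be extended to the right as a solution on a larger subinterval of `[t₀, τ₀)`. -/
def Noncontinuable (a b c d : ℝ → ℝ) (t₀ : ℝ) (τ₀ t₁ : EReal) (y : ℝ → ℝ) : Prop :=
  ¬ ∃ (t₂ : EReal) (z : ℝ → ℝ), t₁ < t₂ ∧ t₂ ≤ τ₀ ∧
      IsAbelSolOn a b c d z (eIco t₀ t₂) ∧ EqOn z y (eIco t₀ t₁)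

/-!
Write `F(x) = a x³ + b x² + c x + d`. If `y` solves (1.1) and `z` is differentiable, then
`w = y - z` satisfies `w' + q w = -(z' + F(z))`, where `q = a (y² + y z + z²) + b (y + z) + c` is
the slope of `F` between `z` and `y`. With the integrating factor `exp ∫ q` this gives `η ≤ y`
for the subsolution `η`, and uniqueness of solutions.

For `z = y₁` the right-hand side is `G = (a₁ - a) y₁³ + ⋯ + (d₁ - d)`, so
`exp(∫ q) (y - y₁)(t) ≤ (y - y₁)(t₀) + ∫ exp(∫ q) G`. Where `a < 0` one has `q ≤ c - b²/a`,
hence `exp ∫ q = h · exp ∫ (c - b²/a)` with `h` antitone, absolutely continuous and `h(t₀) = 1`.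
An integration by parts (the second mean value theorem) bounds `∫ h · exp(∫ (c - b²/a)) G` by
`y₁(t₀) - y(t₀)`, which is condition (II). The inequality is strict because `h` drops below `1`
as soon as `y ≠ y₁`.

Finally, if `t₁ < τ₀`, then `y`, trapped between `η` and `y₁`, is bounded near `t₁`.
Picard–Lindelöf gives local solutions that exist for a time independent of the starting point,
so one started close to `t₁` extends `y` beyond `t₁`, contradicting noncontinuability.
-/

open scoped Topology NNReal

theorem ContinuousOn.hasDerivAt_integral_of_mem_Ioo {f : ℝ → ℝ} {A B t : ℝ}
    (hf : ContinuousOn f (Icc A B)) (ht : t ∈ Ioo A B) :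
    HasDerivAt (fun s => ∫ x in A..s, f x) (f t) t :=
  integral_hasDerivAt_right
    (hf.mono (by rw [uIcc_of_le ht.1.le]; exact Icc_subset_Icc_right ht.2.le)).intervalIntegrable
    ((hf.mono Ioo_subset_Icc_self).stronglyMeasurableAtFilter isOpen_Ioo t ht)
    (hf.continuousAt (Icc_mem_nhds ht.1 ht.2))

theorem continuousOn_intervalIntegral_of_integrableOn {f : ℝ → ℝ} {A B : ℝ}
    (hf : IntegrableOn f (Icc A B)) : ContinuousOn (fun s => ∫ x in A..s, f x) (Icc A B) := by
  rcases le_or_gt A B with hAB | hBA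
  · rw [← uIcc_of_le hAB] at hf ⊢
    exact continuousOn_primitive_interval hf
  · simp [Icc_eq_empty_of_lt hBA]

theorem integral_neg_of_ae_neg {f : ℝ → ℝ} {A B : ℝ} (hAB : A < B)
    (hf : IntegrableOn f (Icc A B)) (hneg : ∀ᵐ x ∂(volume.restrict (Icc A B)), f x < 0) :
    ∫ x in A..B, f x < 0 := by
  have hIoc : ∀ᵐ x ∂(volume.restrict (Ioc A B)), f x < 0 :=
    ae_restrict_of_ae_restrict_of_subset Ioc_subset_Icc_self hneg
  refine (integral_lt_integral_of_ae_le_of_measure_setOfPred_lt_ne_zero hAB.le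
    ((intervalIntegrable_iff_integrableOn_Icc_of_le hAB.le).2 hf) intervalIntegrable_const
    (hIoc.mono fun x hx => hx.le) fun h0 => ?_).trans_eq integral_zero
  have : ∀ᵐ _ ∂(volume.restrict (Ioc A B)), False := by
    filter_upwards [measure_eq_zero_iff_ae_notMem.1 h0, hIoc] with x hx hx' using hx hx'
  rw [Filter.eventually_false_iff_eq_bot, ae_eq_bot, Measure.restrict_eq_zero,
    Real.volume_Ioc, ENNReal.ofReal_eq_zero] at this
  linarith

theorem exists_Ioc_forall_mem_Icc_of_eventually {P : ℝ → Prop} {A B : ℝ} (hAB : A < B)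
    (h : ∀ᶠ s in 𝓝[≥] A, P s) : ∃ A' ∈ Ioc A B, ∀ s ∈ Icc A A', P s := by
  obtain ⟨u, hu, hsub⟩ := mem_nhdsGE_iff_exists_Icc_subset.1 h
  exact ⟨min u B, ⟨lt_min hu hAB, min_le_right _ _⟩,
    fun s hs => hsub ⟨hs.1, hs.2.trans (min_le_left _ _)⟩⟩

theorem exp_integral_mul_le_of_hasDerivWithinAt {Q r w : ℝ → ℝ} {A B t : ℝ}
    (hQ : ContinuousOn Q (Icc A B)) (hr : ContinuousOn r (Icc A B))
    (hw : ∀ s ∈ Icc A B, ∃ w', HasDerivWithinAt w w' (Icc A B) s ∧ w' + Q s * w s ≤ r s)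
    (ht : t ∈ Icc A B) :
    Real.exp (∫ s in A..t, Q s) * w t ≤
      w A + ∫ s in A..t, Real.exp (∫ σ in A..s, Q σ) * r s := by
  set μ := fun s => Real.exp (∫ σ in A..s, Q σ)
  have hμ : ContinuousOn μ (Icc A B) := Real.continuous_exp.comp_continuousOn
    (continuousOn_intervalIntegral_of_integrableOn hQ.integrableOn_Icc)
  choose! w' hw' hw'r using hw
  have hF : AntitoneOn (fun s => μ s * w s - ∫ σ in A..s, μ σ * r σ) (Icc A B) := by
    refine antitoneOn_of_hasDerivWithinAt_nonpos (convex_Icc A B)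
      ((hμ.mul fun s hs => (hw' s hs).continuousWithinAt).sub
        (continuousOn_intervalIntegral_of_integrableOn (hμ.mul hr).integrableOn_Icc))
      (f' := fun s => μ s * (Q s * w s + w' s) - μ s * r s) (fun s hs => ?_) fun s hs => ?_
    · rw [interior_Icc] at hs
      exact (((hQ.hasDerivAt_integral_of_mem_Ioo hs).exp.mul
        ((hw' s (Ioo_subset_Icc_self hs)).hasDerivAt (Icc_mem_nhds hs.1 hs.2))).sub
          ((hμ.mul hr).hasDerivAt_integral_of_mem_Ioo hs)).hasDerivWithinAt.congr_deriv
            (by simp only [μ, Pi.mul_apply]; ring)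
    · rw [interior_Icc] at hs
      have := hw'r s (Ioo_subset_Icc_self hs)
      have := Real.exp_pos (∫ σ in A..s, Q σ)
      simp only [μ]
      nlinarith
  simpa [μ] using hF (left_mem_Icc.2 (ht.1.trans ht.2)) ht ht.1

theorem LocallyLipschitz.comp_absolutelyContinuousOnInterval {φ f : ℝ → ℝ} {A B : ℝ}
    (hφ : LocallyLipschitz φ) (hf : AbsolutelyContinuousOnInterval f A B) :
    AbsolutelyContinuousOnInterval (φ ∘ f) A B := by
  obtain ⟨K, hK⟩ := (hφ.locallyLipschitzOn (s := f '' uIcc A B)).exists_lipschitzOnWith_of_compact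
    (isCompact_uIcc.image_of_continuousOn hf.continuousOn)
  refine squeeze_zero'
    (Filter.Eventually.of_forall fun _ => Finset.sum_nonneg fun _ _ => dist_nonneg)
    ?_ (by simpa using Filter.Tendsto.const_mul (K : ℝ) hf)
  filter_upwards [Filter.mem_inf_of_right (Filter.mem_principal_self _)] with E hE
  rw [Finset.mul_sum]
  exact Finset.sum_le_sum fun i hi =>
    hK.dist_le_mul _ (mem_image_of_mem f (hE.1 i hi).1) _ (mem_image_of_mem f (hE.1 i hi).2)

theorem AbsolutelyContinuousOnInterval.integral_mul_le_of_antitoneOn {h g : ℝ → ℝ}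
    {A B C : ℝ} (hAB : A ≤ B) (hh : AbsolutelyContinuousOnInterval h A B)
    (hanti : AntitoneOn h (Icc A B)) (hg : ContinuousOn g (Icc A B))
    (hC : ∀ s ∈ Icc A B, ∫ x in A..s, g x ≤ C) :
    ∫ x in A..B, h x * g x ≤ (h A - h B) * C + h B * ∫ x in A..B, g x := by
  set Φ := fun s => ∫ x in A..s, g x
  have hΦ : AbsolutelyContinuousOnInterval Φ A B :=
    (hg.intervalIntegrable_of_Icc hAB).absolutelyContinuousOnInterval_intervalIntegral
      left_mem_uIcc
  have hparts := hh.integral_mul_deriv_eq_deriv_mul hΦ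
  have hhg : ∫ x in A..B, h x * g x = ∫ x in A..B, h x * deriv Φ x := by
    refine integral_congr_ae ?_
    filter_upwards [Measure.ae_ne volume B] with x hxB hx
    rw [uIoc_of_le hAB] at hx
    rw [(hg.hasDerivAt_integral_of_mem_Ioo ⟨hx.1, lt_of_le_of_ne hx.2 hxB⟩).deriv]
  have hmono : ∫ x in A..B, deriv h x * C ≤ ∫ x in A..B, deriv h x * Φ x := by
    refine integral_mono_on_of_le_Ioo hAB (hh.intervalIntegrable_deriv.mul_const C)
      (hh.intervalIntegrable_deriv.mul_continuousOn hΦ.continuousOn) fun x hx => ?_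
    have hderiv : deriv h x ≤ 0 := by
      rw [← derivWithin_of_mem_nhds (Icc_mem_nhds hx.1 hx.2)]
      exact hanti.derivWithin_nonpos
    exact mul_le_mul_of_nonpos_left (hC x (Ioo_subset_Icc_self hx)) hderiv
  rw [intervalIntegral.integral_mul_const, hh.integral_deriv_eq_sub] at hmono
  simp only [Φ, integral_same, mul_zero, sub_zero] at hparts
  rw [hhg, hparts]
  linarith

theorem AbsolutelyContinuousOnInterval.integral_mul_lt_of_antitoneOn {h g : ℝ → ℝ}
    {A A' B C C' : ℝ} (hAA' : A ≤ A') (hA'B : A' ≤ B) (hh : AbsolutelyContinuousOnInterval h A B)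
    (hanti : AntitoneOn h (Icc A B)) (hB : 0 ≤ h B) (hA' : h A' < h A)
    (hg : ContinuousOn g (Icc A B)) (hC : ∀ s ∈ Icc A B, ∫ x in A..s, g x ≤ C)
    (hC' : C' < C) (hC'A' : ∀ s ∈ Icc A A', ∫ x in A..s, g x ≤ C') :
    ∫ x in A..B, h x * g x < h A * C := by
  have hAB := hAA'.trans hA'B
  have hA'mem : A' ∈ Icc A B := ⟨hAA', hA'B⟩
  have hgi : ∀ s ∈ Icc A B, IntervalIntegrable g volume A s := fun s hs =>
    (hg.mono (Icc_subset_Icc_right hs.2)).intervalIntegrable_of_Icc hs.1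
  have hhg : ∀ u ∈ Icc A B, ∀ v ∈ Icc A B, IntervalIntegrable (fun x => h x * g x) volume u v :=
    fun u hu v hv => ((uIcc_of_le hAB ▸ hh.continuousOn).mul hg
      |>.mono (uIcc_subset_Icc hu hv)).intervalIntegrable
  have h₁ := (hh.mono (uIcc_subset_uIcc left_mem_uIcc (mem_uIcc_of_le hAA' hA'B)))
    |>.integral_mul_le_of_antitoneOn hAA' (hanti.mono (Icc_subset_Icc_right hA'B))
      (hg.mono (Icc_subset_Icc_right hA'B)) hC'A'
  have h₂ := (hh.mono (uIcc_subset_uIcc (mem_uIcc_of_le hAA' hA'B) right_mem_uIcc))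
    |>.integral_mul_le_of_antitoneOn hA'B (hanti.mono (Icc_subset_Icc_left hAA'))
      (hg.mono (Icc_subset_Icc_left hAA')) (C := C - ∫ x in A..A', g x) fun s hs => by
        rw [← integral_interval_sub_left (hgi s ⟨hAA'.trans hs.1, hs.2⟩) (hgi A' hA'mem)]
        linarith [hC s ⟨hAA'.trans hs.1, hs.2⟩]
  rw [← integral_interval_sub_left (hgi B (right_mem_Icc.2 hAB)) (hgi A' hA'mem)] at h₂
  rw [← integral_add_adjacent_intervals (hhg A (left_mem_Icc.2 hAB) A' hA'mem)
    (hhg A' hA'mem B (right_mem_Icc.2 hAB))]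
  have := mul_nonneg hB (sub_nonneg.2 (hC B (right_mem_Icc.2 hAB)))
  have := mul_pos (sub_pos.2 hA') (sub_pos.2 hC')
  nlinarith

section ExpIntegral

variable {r g : ℝ → ℝ} {A B C : ℝ}

theorem antitoneOn_exp_integral (hr : IntegrableOn r (Icc A B))
    (hr0 : ∀ᵐ x ∂(volume.restrict (Icc A B)), r x ≤ 0) :
    AntitoneOn (fun x => Real.exp (∫ σ in A..x, r σ)) (Icc A B) := by
  have hri : ∀ u ∈ Icc A B, ∀ v ∈ Icc A B, u ≤ v → IntervalIntegrable r volume u v :=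
    fun u hu v hv huv => (intervalIntegrable_iff_integrableOn_Icc_of_le huv).2
      (hr.mono_set (Icc_subset_Icc hu.1 hv.2))
  intro u hu v hv huv
  have hle : ∫ x in u..v, r x ≤ 0 := by
    simpa using integral_mono_ae_restrict huv (hri u hu v hv huv) intervalIntegrable_const
      (ae_restrict_of_ae_restrict_of_subset (Icc_subset_Icc hu.1 hv.2) hr0)
  have hA := left_mem_Icc.2 (hu.1.trans hu.2)
  rw [← integral_interval_sub_left (hri A hA v hv hv.1) (hri A hA u hu hu.1)] at hle
  exact Real.exp_le_exp.2 (by linarith)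

theorem absolutelyContinuousOnInterval_exp_integral (hr : IntervalIntegrable r volume A B) :
    AbsolutelyContinuousOnInterval (fun x => Real.exp (∫ σ in A..x, r σ)) A B :=
  Real.contDiff_exp.locallyLipschitz.comp_absolutelyContinuousOnInterval
    (hr.absolutelyContinuousOnInterval_intervalIntegral left_mem_uIcc)

theorem integral_exp_integral_mul_le (hAB : A ≤ B) (hr : IntegrableOn r (Icc A B))
    (hr0 : ∀ᵐ x ∂(volume.restrict (Icc A B)), r x ≤ 0) (hg : ContinuousOn g (Icc A B))
    (hC : ∀ s ∈ Icc A B, ∫ x in A..s, g x ≤ C) :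
    ∫ x in A..B, Real.exp (∫ σ in A..x, r σ) * g x ≤ C := by
  have := (absolutelyContinuousOnInterval_exp_integral
    ((intervalIntegrable_iff_integrableOn_Icc_of_le hAB).2 hr)).integral_mul_le_of_antitoneOn
      hAB (antitoneOn_exp_integral hr hr0) hg hC
  have := mul_le_mul_of_nonneg_left (hC B (right_mem_Icc.2 hAB))
    (Real.exp_pos (∫ σ in A..B, r σ)).le
  simp only [integral_same, Real.exp_zero] at *
  linarith

theorem integral_exp_integral_mul_lt {A' C' : ℝ} (hAA' : A ≤ A') (hA'B : A' ≤ B)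
    (hr : IntegrableOn r (Icc A B)) (hr0 : ∀ᵐ x ∂(volume.restrict (Icc A B)), r x ≤ 0)
    (hrA' : ∫ x in A..A', r x < 0) (hg : ContinuousOn g (Icc A B))
    (hC : ∀ s ∈ Icc A B, ∫ x in A..s, g x ≤ C) (hC' : C' < C)
    (hC'A' : ∀ s ∈ Icc A A', ∫ x in A..s, g x ≤ C') :
    ∫ x in A..B, Real.exp (∫ σ in A..x, r σ) * g x < C := by
  simpa using (absolutelyContinuousOnInterval_exp_integral
    ((intervalIntegrable_iff_integrableOn_Icc_of_le (hAA'.trans hA'B)).2 hr))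
    |>.integral_mul_lt_of_antitoneOn hAA' hA'B (antitoneOn_exp_integral hr hr0)
      (Real.exp_pos _).le (by simpa using hrA') hg hC hC' hC'A'

end ExpIntegral

theorem cubic_slope_add_sq_div_le {a b u v : ℝ} (ha : a < 0) :
    a * (u ^ 2 + u * v + v ^ 2) + b * (u + v) + b ^ 2 / a ≤ a * (u - v) ^ 2 / 4 := by
  have key : a * (u ^ 2 + u * v + v ^ 2) + b * (u + v) + b ^ 2 / a - a * (u - v) ^ 2 / 4
      = (3 * a * (u + v) + 2 * b) ^ 2 / (12 * a) + 2 * b ^ 2 / (3 * a) := by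
    field_simp [ha.ne]
    ring
  have h1 : (3 * a * (u + v) + 2 * b) ^ 2 / (12 * a) ≤ 0 :=
    div_nonpos_of_nonneg_of_nonpos (sq_nonneg _) (by linarith)
  have h2 : 2 * b ^ 2 / (3 * a) ≤ 0 :=
    div_nonpos_of_nonneg_of_nonpos (by positivity) (by linarith)
  linarith

theorem abs_cubic_le {p q r s x M R : ℝ} (hM : |p| + |q| + |r| + |s| ≤ M) (hx : |x| ≤ R)
    (hR : 1 ≤ R) : |p * x ^ 3 + q * x ^ 2 + r * x + s| ≤ M * R ^ 3 := by
  have h3 : |x| ^ 3 ≤ R ^ 3 := pow_le_pow_left₀ (abs_nonneg x) hx 3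
  have h2 : |x| ^ 2 ≤ R ^ 3 :=
    (pow_le_pow_left₀ (abs_nonneg x) hx 2).trans (pow_le_pow_right₀ hR (by norm_num))
  have h1 : |x| ≤ R ^ 3 := hx.trans (le_self_pow₀ hR (by norm_num))
  have h0 : 1 ≤ R ^ 3 := one_le_pow₀ hR
  have := abs_add_le (p * x ^ 3 + q * x ^ 2 + r * x) s
  have := abs_add_le (p * x ^ 3 + q * x ^ 2) (r * x)
  have := abs_add_le (p * x ^ 3) (q * x ^ 2)
  simp only [abs_mul, abs_pow] at *
  nlinarith [abs_nonneg p, abs_nonneg q, abs_nonneg r, abs_nonneg s]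

theorem abs_cubic_sub_le {p q r s x y M R : ℝ} (hM : |p| + |q| + |r| ≤ M) (hx : |x| ≤ R)
    (hy : |y| ≤ R) (hR : 1 ≤ R) :
    |(p * x ^ 3 + q * x ^ 2 + r * x + s) - (p * y ^ 3 + q * y ^ 2 + r * y + s)| ≤
      3 * M * R ^ 2 * |x - y| := by
  have hxy : |x ^ 2 + x * y + y ^ 2| ≤ 3 * R ^ 2 := by
    have := abs_add_le (x ^ 2 + x * y) (y ^ 2)
    have := abs_add_le (x ^ 2) (x * y)
    simp only [abs_mul, abs_pow] at *
    nlinarith [abs_nonneg x, abs_nonneg y]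
  have hsum : |x + y| ≤ 3 * R ^ 2 := by
    have := abs_add_le x y
    nlinarith
  have hone : (1 : ℝ) ≤ 3 * R ^ 2 := by nlinarith
  have hfac : |p * (x ^ 2 + x * y + y ^ 2) + q * (x + y) + r| ≤ 3 * R ^ 2 * M := by
    have := abs_add_le (p * (x ^ 2 + x * y + y ^ 2) + q * (x + y)) r
    have := abs_add_le (p * (x ^ 2 + x * y + y ^ 2)) (q * (x + y))
    simp only [abs_mul] at *
    nlinarith [mul_le_mul_of_nonneg_left hxy (abs_nonneg p),
      mul_le_mul_of_nonneg_left hsum (abs_nonneg q), mul_le_mul_of_nonneg_left hone (abs_nonneg r),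
      mul_le_mul_of_nonneg_left hM (by positivity : (0 : ℝ) ≤ 3 * R ^ 2)]
  rw [show (p * x ^ 3 + q * x ^ 2 + r * x + s) - (p * y ^ 3 + q * y ^ 2 + r * y + s) =
    (p * (x ^ 2 + x * y + y ^ 2) + q * (x + y) + r) * (x - y) by ring, abs_mul]
  nlinarith [abs_nonneg (x - y)]

def IsAbelSubsolOn (a b c d η : ℝ → ℝ) (S : Set ℝ) : Prop :=
  ∀ t ∈ S, ∃ v, HasDerivWithinAt η v S t ∧
    v + a t * η t ^ 3 + b t * η t ^ 2 + c t * η t + d t ≤ 0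

def abelSlope (a b c y z : ℝ → ℝ) (t : ℝ) : ℝ :=
  a t * (y t ^ 2 + y t * z t + z t ^ 2) + b t * (y t + z t) + c t

section Abel

variable {a b c d y z η : ℝ → ℝ} {S T : Set ℝ}

theorem abelRHS_sub_abelRHS (a b c d y z : ℝ → ℝ) (t : ℝ) :
    abelRHS a b c d y t - abelRHS a b c d z t = -(abelSlope a b c y z t * (y t - z t)) := by
  simp only [abelRHS, abelSlope]
  ring

theorem ContinuousOn.abelSlope (ha : ContinuousOn a S) (hb : ContinuousOn b S)
    (hc : ContinuousOn c S) (hy : ContinuousOn y S) (hz : ContinuousOn z S) :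
    ContinuousOn (abelSlope a b c y z) S := by
  unfold _root_.abelSlope
  fun_prop

theorem abelSlope_sub_nonpos {t : ℝ} (ha : a t < 0) :
    abelSlope a b c y z t - (c t - b t ^ 2 / a t) ≤ 0 := by
  have := cubic_slope_add_sq_div_le (b := b t) (u := y t) (v := z t) ha
  have := mul_nonpos_of_nonpos_of_nonneg ha.le (sq_nonneg (y t - z t))
  simp only [abelSlope]
  linarith

theorem abelSlope_sub_neg {t : ℝ} (ha : a t < 0) (hyz : y t < z t) :
    abelSlope a b c y z t - (c t - b t ^ 2 / a t) < 0 := by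
  have := cubic_slope_add_sq_div_le (b := b t) (u := y t) (v := z t) ha
  have := mul_neg_of_neg_of_pos ha (sq_pos_of_neg (sub_neg.2 hyz))
  simp only [abelSlope]
  linarith

theorem IsAbelSolOn.mono (hy : IsAbelSolOn a b c d y S) (hTS : T ⊆ S) :
    IsAbelSolOn a b c d y T :=
  fun t ht => (hy t (hTS ht)).mono hTS

theorem IsAbelSolOn.continuousOn (hy : IsAbelSolOn a b c d y S) : ContinuousOn y S :=
  fun t ht => (hy t ht).continuousWithinAt

theorem IsAbelSolOn.isAbelSubsolOn (hy : IsAbelSolOn a b c d y S) :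
    IsAbelSubsolOn a b c d y S :=
  fun t ht => ⟨_, hy t ht, by simp only [abelRHS]; linarith⟩

theorem IsAbelSubsolOn.mono (hη : IsAbelSubsolOn a b c d η S) (hTS : T ⊆ S) :
    IsAbelSubsolOn a b c d η T := fun t ht =>
  let ⟨v, hv, hvle⟩ := hη t (hTS ht)
  ⟨v, hv.mono hTS, hvle⟩

theorem IsAbelSubsolOn.continuousOn (hη : IsAbelSubsolOn a b c d η S) : ContinuousOn η S :=
  fun t ht => (hη t ht).choose_spec.1.continuousWithinAt

theorem IsAbelSolOn.hasDerivWithinAt_of_eqOn {t : ℝ} (hy : IsAbelSolOn a b c d y T)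
    (ht : t ∈ T) (hT : T ∈ 𝓝[S] t) (heq : EqOn z y T) :
    HasDerivWithinAt z (abelRHS a b c d z t) S t := by
  have hzt : z t = y t := heq ht
  rw [show abelRHS a b c d z t = abelRHS a b c d y t by simp only [abelRHS, hzt]]
  exact ((hy t ht).mono_of_mem_nhdsWithin hT).congr_of_eventuallyEq
    (Filter.eventually_of_mem hT heq) hzt

section Icc

variable {A B t : ℝ} (ha : ContinuousOn a (Icc A B)) (hb : ContinuousOn b (Icc A B))
  (hc : ContinuousOn c (Icc A B))
include ha hb hc

theorem IsAbelSubsolOn.exp_integral_mul_sub_le (hη : IsAbelSubsolOn a b c d η (Icc A B))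
    (hy : IsAbelSolOn a b c d y (Icc A B)) (ht : t ∈ Icc A B) :
    Real.exp (∫ s in A..t, abelSlope a b c η y s) * (η t - y t) ≤ η A - y A := by
  have := exp_integral_mul_le_of_hasDerivWithinAt (r := 0)
    (ha.abelSlope hb hc hη.continuousOn hy.continuousOn) continuousOn_const
    (w := fun s => η s - y s) (fun s hs => ?_) ht
  · simpa using this
  obtain ⟨v, hv, hvle⟩ := hη s hs
  refine ⟨_, hv.sub (hy s hs), ?_⟩
  have := abelRHS_sub_abelRHS a b c d η y s
  simp only [abelRHS, Pi.zero_apply] at this ⊢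
  linarith

theorem IsAbelSubsolOn.le_of_le (hη : IsAbelSubsolOn a b c d η (Icc A B))
    (hy : IsAbelSolOn a b c d y (Icc A B)) (hA : η A ≤ y A) (ht : t ∈ Icc A B) :
    η t ≤ y t := by
  have := hη.exp_integral_mul_sub_le ha hb hc hy ht
  have := Real.exp_pos (∫ s in A..t, abelSlope a b c η y s)
  nlinarith

theorem IsAbelSubsolOn.lt_of_lt (hη : IsAbelSubsolOn a b c d η (Icc A B))
    (hy : IsAbelSolOn a b c d y (Icc A B)) (hA : η A < y A) (ht : t ∈ Icc A B) :
    η t < y t := by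
  have := hη.exp_integral_mul_sub_le ha hb hc hy ht
  have := Real.exp_pos (∫ s in A..t, abelSlope a b c η y s)
  nlinarith

theorem IsAbelSolOn.eqOn_of_eq (hy : IsAbelSolOn a b c d y (Icc A B))
    (hz : IsAbelSolOn a b c d z (Icc A B)) (hA : y A = z A) : EqOn y z (Icc A B) :=
  fun _ ht => le_antisymm (hy.isAbelSubsolOn.le_of_le ha hb hc hz hA.le ht)
    (hz.isAbelSubsolOn.le_of_le ha hb hc hy hA.ge ht)

end Icc

end Abel

section Comparison

/- `G` is the defect of `y₁` as a solution of (1.1); for a solution of (2.1) it is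
`(a₁ - a) y₁³ + (b₁ - b) y₁² + (c₁ - c) y₁ + (d₁ - d)`. -/
variable {a b c d y y₁ G : ℝ → ℝ} {A B : ℝ}
  (ha : ContinuousOn a (Icc A B)) (hb : ContinuousOn b (Icc A B))
  (hc : ContinuousOn c (Icc A B)) (hG : ContinuousOn G (Icc A B))
  (hint : IntegrableOn (fun s => b s ^ 2 / a s) (Icc A B))
  (hy : IsAbelSolOn a b c d y (Icc A B))
  (hy₁ : ∀ s ∈ Icc A B, HasDerivWithinAt y₁ (abelRHS a b c d y₁ s - G s) (Icc A B) s)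
  (hAB : A ≤ B) (haneg : ∀ᵐ s ∂(volume.restrict (Icc A B)), a s < 0)
  (hII : ∀ t ∈ Icc A B, y A - y₁ A +
    ∫ τ in A..t, Real.exp (∫ s in A..τ, (c s - b s ^ 2 / a s)) * G τ ≤ 0)
include ha hb hc hG hint hy hy₁ hAB

theorem IsAbelSolOn.exp_integral_mul_sub_le_integral :
    Real.exp (∫ s in A..B, abelSlope a b c y y₁ s) * (y B - y₁ B) ≤ y A - y₁ A +
      ∫ τ in A..B, Real.exp (∫ s in A..τ, (abelSlope a b c y y₁ s - (c s - b s ^ 2 / a s))) *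
        (Real.exp (∫ s in A..τ, (c s - b s ^ 2 / a s)) * G τ) := by
  have hq := ha.abelSlope hb hc hy.continuousOn fun s hs => (hy₁ s hs).continuousWithinAt
  have hp : IntegrableOn (fun s => c s - b s ^ 2 / a s) (Icc A B) :=
    hc.integrableOn_Icc.sub hint
  refine (exp_integral_mul_le_of_hasDerivWithinAt hq hG (w := fun s => y s - y₁ s)
    (fun s hs => ⟨_, (hy s hs).sub (hy₁ s hs), ?_⟩) (right_mem_Icc.2 hAB)).trans_eq ?_
  · have := abelRHS_sub_abelRHS a b c d y y₁ s
    linarith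
  · congr 1
    refine integral_congr fun τ hτ => ?_
    rw [uIcc_of_le hAB] at hτ
    have hsub : Icc A τ ⊆ Icc A B := Icc_subset_Icc_right hτ.2
    rw [← mul_assoc, ← Real.exp_add, integral_sub
      ((intervalIntegrable_iff_integrableOn_Icc_of_le hτ.1).2 (hq.integrableOn_Icc.mono_set hsub))
      ((intervalIntegrable_iff_integrableOn_Icc_of_le hτ.1).2 (hp.mono_set hsub)), sub_add_cancel]

include haneg hII

theorem IsAbelSolOn.le_of_forall_integral_nonpos : y B ≤ y₁ B := by
  have hq := ha.abelSlope hb hc hy.continuousOn fun s hs => (hy₁ s hs).continuousWithinAt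
  have hp : IntegrableOn (fun s => c s - b s ^ 2 / a s) (Icc A B) :=
    hc.integrableOn_Icc.sub hint
  have hbound := integral_exp_integral_mul_le hAB (hq.integrableOn_Icc.sub hp)
    (r := fun s => abelSlope a b c y y₁ s - (c s - b s ^ 2 / a s))
    (g := fun τ => Real.exp (∫ s in A..τ, (c s - b s ^ 2 / a s)) * G τ)
    (haneg.mono fun s hs => abelSlope_sub_nonpos hs)
    ((Real.continuous_exp.comp_continuousOn
      (continuousOn_intervalIntegral_of_integrableOn hp)).mul hG)
    (C := y₁ A - y A) fun s hs => by linarith [hII s hs]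
  have hrep := hy.exp_integral_mul_sub_le_integral ha hb hc hG hint hy₁ hAB
  have := Real.exp_pos (∫ s in A..B, abelSlope a b c y y₁ s)
  nlinarith

theorem IsAbelSolOn.lt_of_forall_integral_nonpos (hA : y A < y₁ A) : y B < y₁ B := by
  rcases hAB.eq_or_lt with rfl | hlt
  · exact hA
  have hy₁c : ContinuousOn y₁ (Icc A B) := fun s hs => (hy₁ s hs).continuousWithinAt
  have hq := ha.abelSlope hb hc hy.continuousOn hy₁c
  have hp : IntegrableOn (fun s => c s - b s ^ 2 / a s) (Icc A B) :=
    hc.integrableOn_Icc.sub hint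
  set Φ := fun t => ∫ τ in A..t, Real.exp (∫ s in A..τ, (c s - b s ^ 2 / a s)) * G τ
  have hg : ContinuousOn (fun τ => Real.exp (∫ s in A..τ, (c s - b s ^ 2 / a s)) * G τ)
      (Icc A B) := (Real.continuous_exp.comp_continuousOn
        (continuousOn_intervalIntegral_of_integrableOn hp)).mul hG
  -- Strictness comes from a short interval `[A, A']` on which `y < y₁`, so that the weight
  -- `exp ∫ (abelSlope - (c - b²/a))` ends strictly below `1`, and on which `Φ` stays below
  -- half of its bound `y₁ A - y A`.
  have hAmem := left_mem_Icc.2 hAB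
  obtain ⟨A', ⟨hAA', hA'B⟩, hA'⟩ := exists_Ioc_forall_mem_Icc_of_eventually hlt
    (P := fun s => Φ s < (y₁ A - y A) / 2 ∧ y s < y₁ s) <| by
      rw [← nhdsWithin_Icc_eq_nhdsGE hlt]
      exact (Filter.Tendsto.eventually_lt_const (by simp; linarith)
        (continuousOn_intervalIntegral_of_integrableOn hg.integrableOn_Icc A hAmem)).and
        ((hy.continuousOn A hAmem).eventually_lt (hy₁c A hAmem) hA)
  have hrA' : ∫ s in A..A', (abelSlope a b c y y₁ s - (c s - b s ^ 2 / a s)) < 0 := by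
    refine integral_neg_of_ae_neg hAA'
      ((hq.integrableOn_Icc.sub hp).mono_set (Icc_subset_Icc_right hA'B)) ?_
    filter_upwards [ae_restrict_of_ae_restrict_of_subset (Icc_subset_Icc_right hA'B) haneg,
      ae_restrict_mem measurableSet_Icc] with s has hs
    exact abelSlope_sub_neg has (hA' s hs).2
  have hbound := integral_exp_integral_mul_lt hAA'.le hA'B (hq.integrableOn_Icc.sub hp)
    (r := fun s => abelSlope a b c y y₁ s - (c s - b s ^ 2 / a s))
    (haneg.mono fun s hs => abelSlope_sub_nonpos hs) hrA' hg
    (C := y₁ A - y A) (fun s hs => by linarith [hII s hs]) (C' := (y₁ A - y A) / 2)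
    (by linarith) fun s hs => (hA' s hs).1.le
  have hrep := hy.exp_integral_mul_sub_le_integral ha hb hc hG hint hy₁ hAB
  have := Real.exp_pos (∫ s in A..B, abelSlope a b c y y₁ s)
  nlinarith

end Comparison

theorem exists_pos_forall_exists_isAbelSolOn_Icc {a b c d : ℝ → ℝ} {T₁ T₂ : ℝ} (N : ℝ≥0)
    (ha : ContinuousOn a (Icc T₁ T₂)) (hb : ContinuousOn b (Icc T₁ T₂))
    (hc : ContinuousOn c (Icc T₁ T₂)) (hd : ContinuousOn d (Icc T₁ T₂)) :
    ∃ δ > 0, ∀ t₀ t₁ x₀ : ℝ, T₁ ≤ t₀ → t₀ ≤ t₁ → t₁ ≤ T₂ → t₁ - t₀ ≤ δ → |x₀| ≤ N →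
      ∃ ζ : ℝ → ℝ, ζ t₀ = x₀ ∧ IsAbelSolOn a b c d ζ (Icc t₀ t₁) := by
  obtain ⟨M, hM⟩ : ∃ M : ℝ≥0, ∀ t ∈ Icc T₁ T₂, |a t| + |b t| + |c t| + |d t| ≤ M := by
    obtain ⟨C, hC⟩ := isCompact_Icc.exists_bound_of_continuousOn
      (((ha.abs.add hb.abs).add hc.abs).add hd.abs)
    exact ⟨C.toNNReal, fun t ht =>
      (le_abs_self _).trans ((hC t ht).trans (Real.le_coe_toNNReal C))⟩
  set R : ℝ≥0 := N + 1
  have hR : (1 : ℝ) ≤ R := by simp [R]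
  -- On the ball of radius `R` about `0` the field is bounded by `M R³` and `3 M R²`-Lipschitz;
  -- `M R³ δ ≤ 1` keeps a solution starting in the ball of radius `N` inside it.
  refine ⟨1 / (M * R ^ 3 + 1), by positivity, fun t₀ t₁ x₀ hT₁ ht₀₁ hT₂ hδ hx₀ => ?_⟩
  have hsub : Icc t₀ t₁ ⊆ Icc T₁ T₂ := Icc_subset_Icc hT₁ hT₂
  have hPL : IsPicardLindelof (fun t x => abelRHS a b c d (fun _ => x) t)
      (⟨t₀, left_mem_Icc.2 ht₀₁⟩ : Icc t₀ t₁) 0 R N (M * R ^ 3) (3 * M * R ^ 2) := by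
    refine ⟨fun t ht => LipschitzOnWith.of_dist_le_mul fun x hx y hy => ?_,
      fun x _ => ?_, fun t ht x hx => ?_, ?_⟩
    · rw [mem_closedBall_zero_iff, Real.norm_eq_abs] at hx hy
      rw [Real.dist_eq, Real.dist_eq, abelRHS, abelRHS, neg_sub_neg, abs_sub_comm x y]
      push_cast
      exact abs_cubic_sub_le (by linarith [hM t (hsub ht), abs_nonneg (d t)]) hy hx hR
    · unfold abelRHS
      exact (((ha.mono hsub).mul continuousOn_const).add ((hb.mono hsub).mul continuousOn_const)
        |>.add ((hc.mono hsub).mul continuousOn_const) |>.add (hd.mono hsub)).neg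
    · rw [mem_closedBall_zero_iff, Real.norm_eq_abs] at hx
      rw [Real.norm_eq_abs, abelRHS, abs_neg]
      push_cast
      exact abs_cubic_le (hM t (hsub ht)) hx hR
    · have hK : (0 : ℝ) ≤ M * R ^ 3 := by positivity
      rw [sub_self, max_eq_left (sub_nonneg.2 ht₀₁), show (R : ℝ) - N = 1 by simp [R]]
      push_cast
      calc (M : ℝ) * R ^ 3 * (t₁ - t₀) ≤ M * R ^ 3 * (1 / (M * R ^ 3 + 1)) :=
            mul_le_mul_of_nonneg_left hδ hK
        _ ≤ 1 := by rw [mul_one_div, div_le_one (by positivity)]; linarith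
  exact hPL.exists_eq_forall_mem_Icc_hasDerivWithinAt (by simpa using hx₀)

theorem IsAbelSolOn.exists_extension {a b c d y : ℝ → ℝ} {t₀ r R N : ℝ} (ht₀r : t₀ < r)
    (hrR : r < R) (ha : ContinuousOn a (Icc t₀ R)) (hb : ContinuousOn b (Icc t₀ R))
    (hc : ContinuousOn c (Icc t₀ R)) (hd : ContinuousOn d (Icc t₀ R))
    (hy : IsAbelSolOn a b c d y (Ico t₀ r)) (hbdd : ∀ t ∈ Ico t₀ r, |y t| ≤ N) :
    ∃ r' ∈ Ioc r R, ∃ z, IsAbelSolOn a b c d z (Ico t₀ r') ∧ EqOn z y (Ico t₀ r) := by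
  obtain ⟨δ, hδ, hloc⟩ := exists_pos_forall_exists_isAbelSolOn_Icc N.toNNReal ha hb hc hd
  set tc := max t₀ (r - δ / 2)
  set e := min (r + δ / 2) R
  have htc : tc ∈ Ico t₀ r := ⟨le_max_left _ _, max_lt ht₀r (by linarith)⟩
  have hre : r < e := lt_min (by linarith) hrR
  obtain ⟨ζ, hζ₀, hζ⟩ := hloc tc e (y tc) htc.1 (htc.2.le.trans hre.le) (min_le_right _ _)
    (by linarith [min_le_left (r + δ / 2) R, le_max_right t₀ (r - δ / 2)])
    ((hbdd tc htc).trans (Real.le_coe_toNNReal N))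
  have hyζ : EqOn y ζ (Ico tc r) := fun s hs => by
    have hsR : Icc tc s ⊆ Icc t₀ R := Icc_subset_Icc htc.1 (hs.2.trans hrR).le
    exact (hy.mono fun x hx => ⟨htc.1.trans hx.1, hx.2.trans_lt hs.2⟩).eqOn_of_eq
      (ha.mono hsR) (hb.mono hsR) (hc.mono hsR)
      (hζ.mono (Icc_subset_Icc_right (hs.2.trans hre).le)) hζ₀.symm ⟨hs.1, le_rfl⟩
  refine ⟨e, ⟨hre, min_le_right _ _⟩, fun t => if t < r then y t else ζ t,
    fun t ht => ?_, fun t ht => if_pos ht.2⟩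
  rcases lt_or_ge t r with htr | htr
  · exact hy.hasDerivWithinAt_of_eqOn ⟨ht.1, htr⟩ (Filter.mem_of_superset
      (inter_mem_nhdsWithin _ (Iio_mem_nhds htr)) fun x hx => ⟨hx.1.1, hx.2⟩)
      fun x hx => if_pos hx.2
  · have htc' : tc < t := htc.2.trans_le htr
    refine hζ.hasDerivWithinAt_of_eqOn ⟨htc'.le, ht.2.le⟩ (Filter.mem_of_superset
      (inter_mem_nhdsWithin _ (Ioi_mem_nhds htc')) fun x hx => ⟨hx.2.le, hx.1.2.le⟩)
      fun x hx => ?_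
    by_cases hxr : x < r
    · simp only [if_pos hxr]
      exact hyζ ⟨hx.1, hxr⟩
    · simp only [if_neg hxr]

theorem eIco_coe (t₀ r : ℝ) : eIco t₀ r = Ico t₀ r := by
  ext x
  exact and_congr_right' EReal.coe_lt_coe_iff

theorem Noncontinuable.eq_of_le_of_le {a b c d y f g : ℝ → ℝ} {t₀ : ℝ} {τ₀ t₁ : EReal}
    (ha : ContinuousOn a (eIco t₀ τ₀)) (hb : ContinuousOn b (eIco t₀ τ₀))
    (hc : ContinuousOn c (eIco t₀ τ₀)) (hd : ContinuousOn d (eIco t₀ τ₀))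
    (hf : ContinuousOn f (eIco t₀ τ₀)) (hg : ContinuousOn g (eIco t₀ τ₀))
    (ht₁ : (t₀ : EReal) < t₁) (ht₁' : t₁ ≤ τ₀) (hy : IsAbelSolOn a b c d y (eIco t₀ t₁))
    (hnc : Noncontinuable a b c d t₀ τ₀ t₁ y)
    (hfyg : ∀ t ∈ eIco t₀ t₁, f t ≤ y t ∧ y t ≤ g t) : t₁ = τ₀ := by
  by_contra hne
  have hlt := ht₁'.lt_of_ne hne
  obtain ⟨r, rfl⟩ : ∃ r : ℝ, (r : EReal) = t₁ :=
    ⟨t₁.toReal, EReal.coe_toReal (ne_top_of_lt hlt) (ne_bot_of_gt ht₁)⟩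
  obtain ⟨R, hrR, hRτ⟩ := EReal.lt_iff_exists_real_btwn.1 hlt
  rw [eIco_coe] at hy hfyg
  have hR : Icc t₀ R ⊆ eIco t₀ τ₀ := fun x hx =>
    ⟨hx.1, (EReal.coe_le_coe_iff.2 hx.2).trans_lt hRτ⟩
  obtain ⟨Cf, hCf⟩ := isCompact_Icc.exists_bound_of_continuousOn (hf.mono hR)
  obtain ⟨Cg, hCg⟩ := isCompact_Icc.exists_bound_of_continuousOn (hg.mono hR)
  have hbdd : ∀ t ∈ Ico t₀ r, |y t| ≤ max Cf Cg := fun t ht => by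
    have htR : t ∈ Icc t₀ R := ⟨ht.1, (ht.2.trans (EReal.coe_lt_coe_iff.1 hrR)).le⟩
    have := abs_le.1 (hCf t htR)
    have := abs_le.1 (hCg t htR)
    exact abs_le.2 ⟨by linarith [le_max_left Cf Cg, (hfyg t ht).1],
      by linarith [le_max_right Cf Cg, (hfyg t ht).2]⟩
  obtain ⟨r', hr', z, hz, hzy⟩ := hy.exists_extension (EReal.coe_lt_coe_iff.1 ht₁)
    (EReal.coe_lt_coe_iff.1 hrR) (ha.mono hR) (hb.mono hR) (hc.mono hR) (hd.mono hR) hbdd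
  exact hnc ⟨r', z, EReal.coe_lt_coe_iff.2 hr'.1, (EReal.coe_le_coe_iff.2 hr'.2).trans hRτ.le,
    by rwa [eIco_coe], by rwa [eIco_coe]⟩

theorem abelSol_comparison {a b c d a₁ b₁ c₁ d₁ y₁ η y : ℝ → ℝ} {t₀ t : ℝ}
    {τ₀ t₁ : EReal} (ha : ContinuousOn a (eIco t₀ τ₀)) (hb : ContinuousOn b (eIco t₀ τ₀))
    (hc : ContinuousOn c (eIco t₀ τ₀)) (hd : ContinuousOn d (eIco t₀ τ₀))
    (ha₁ : ContinuousOn a₁ (eIco t₀ τ₀)) (hb₁ : ContinuousOn b₁ (eIco t₀ τ₀))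
    (hc₁ : ContinuousOn c₁ (eIco t₀ τ₀)) (hd₁ : ContinuousOn d₁ (eIco t₀ τ₀))
    (hy₁ : IsAbelSolOn a₁ b₁ c₁ d₁ y₁ (eIco t₀ τ₀))
    (hη : IsAbelSubsolOn a b c d η (eIco t₀ τ₀))
    (haneg : ∀ᵐ t ∂(volume.restrict (eIco t₀ τ₀)), a t < 0)
    (hint : ∀ t : ℝ, t₀ < t → (t : EReal) < τ₀ →
      IntegrableOn (fun s => b s ^ 2 / a s) (Icc t₀ t))
    (ht₁' : t₁ ≤ τ₀) (hy : IsAbelSolOn a b c d y (eIco t₀ t₁)) (hηy : η t₀ ≤ y t₀)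
    (hII : ∀ t ∈ eIco t₀ t₁, y t₀ - y₁ t₀ + (∫ τ in t₀..t,
        Real.exp (∫ s in t₀..τ, (c s - b s ^ 2 / a s)) *
          ((a₁ τ - a τ) * y₁ τ ^ 3 + (b₁ τ - b τ) * y₁ τ ^ 2 +
            (c₁ τ - c τ) * y₁ τ + (d₁ τ - d τ))) ≤ 0)
    (ht : t ∈ eIco t₀ t₁) :
    (η t ≤ y t ∧ y t ≤ y₁ t) ∧ (η t₀ < y t₀ → η t < y t) ∧
      (y t₀ < y₁ t₀ → y t < y₁ t) := by
  have hs₁ : Icc t₀ t ⊆ eIco t₀ t₁ := fun s hs =>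
    ⟨hs.1, (EReal.coe_le_coe_iff.2 hs.2).trans_lt ht.2⟩
  have hs : Icc t₀ t ⊆ eIco t₀ τ₀ := fun s hs' => ⟨(hs₁ hs').1, (hs₁ hs').2.trans_le ht₁'⟩
  have hint' : IntegrableOn (fun s => b s ^ 2 / a s) (Icc t₀ t) := by
    rcases ht.1.eq_or_lt with rfl | hlt
    · exact .of_measure_zero (by simp)
    · exact hint t hlt (ht.2.trans_le ht₁')
  have hy₁' : ∀ s ∈ Icc t₀ t, HasDerivWithinAt y₁ (abelRHS a b c d y₁ s -
      ((a₁ s - a s) * y₁ s ^ 3 + (b₁ s - b s) * y₁ s ^ 2 + (c₁ s - c s) * y₁ s + (d₁ s - d s)))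
      (Icc t₀ t) s := fun s hs' =>
    ((hy₁ s (hs hs')).mono hs).congr_deriv (by unfold abelRHS; ring)
  have hG : ContinuousOn (fun s => (a₁ s - a s) * y₁ s ^ 3 + (b₁ s - b s) * y₁ s ^ 2 +
      (c₁ s - c s) * y₁ s + (d₁ s - d s)) (Icc t₀ t) :=
    (((ha₁.sub ha).mul (hy₁.continuousOn.pow 3)).add ((hb₁.sub hb).mul (hy₁.continuousOn.pow 2))
      |>.add ((hc₁.sub hc).mul hy₁.continuousOn) |>.add (hd₁.sub hd)).mono hs
  have ha' := ha.mono hs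
  have hb' := hb.mono hs
  have hc' := hc.mono hs
  have hηt := hη.mono hs
  have hyt := hy.mono hs₁
  have haneg' := ae_restrict_of_ae_restrict_of_subset hs haneg
  have hII' := fun s hs' => hII s (hs₁ hs')
  have hmem := right_mem_Icc.2 ht.1
  exact ⟨⟨hηt.le_of_le ha' hb' hc' hyt hηy hmem,
    hyt.le_of_forall_integral_nonpos ha' hb' hc' hG hint' hy₁' ht.1 haneg' hII'⟩,
    fun h => hηt.lt_of_lt ha' hb' hc' hyt h hmem,
    fun h => hyt.lt_of_forall_integral_nonpos ha' hb' hc' hG hint' hy₁' ht.1 haneg' hII' h⟩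

theorem stmt_5_general (t₀ : ℝ) (τ₀ : EReal)
    (a b c d a₁ b₁ c₁ d₁ y₁ η : ℝ → ℝ)
    (ha : ContinuousOn a (eIco t₀ τ₀)) (hb : ContinuousOn b (eIco t₀ τ₀))
    (hc : ContinuousOn c (eIco t₀ τ₀)) (hd : ContinuousOn d (eIco t₀ τ₀))
    (ha₁ : ContinuousOn a₁ (eIco t₀ τ₀)) (hb₁ : ContinuousOn b₁ (eIco t₀ τ₀))
    (hc₁ : ContinuousOn c₁ (eIco t₀ τ₀)) (hd₁ : ContinuousOn d₁ (eIco t₀ τ₀))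
    (hy₁ : IsAbelSolOn a₁ b₁ c₁ d₁ y₁ (eIco t₀ τ₀))
    (hη : ∀ t ∈ eIco t₀ τ₀, ∃ v : ℝ, HasDerivWithinAt η v (eIco t₀ τ₀) t ∧
      v + a t * η t ^ 3 + b t * η t ^ 2 + c t * η t + d t ≤ 0)
    (haneg : ∀ᵐ t ∂(volume.restrict (eIco t₀ τ₀)), a t < 0)
    (hint : ∀ t : ℝ, t₀ < t → (t : EReal) < τ₀ →
      IntegrableOn (fun s => b s ^ 2 / a s) (Icc t₀ t))
    (γ : ℝ)
    (hII : ∀ t ∈ eIco t₀ τ₀,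
      γ - y₁ t₀ + (∫ τ in t₀..t,
        Real.exp (∫ s in t₀..τ, (c s - b s ^ 2 / a s)) *
          ((a₁ τ - a τ) * y₁ τ ^ 3 + (b₁ τ - b τ) * y₁ τ ^ 2 +
            (c₁ τ - c τ) * y₁ τ + (d₁ τ - d τ))) ≤ 0)
    (t₁ : EReal) (y : ℝ → ℝ) (ht₁ : (t₀ : EReal) < t₁) (ht₁' : t₁ ≤ τ₀)
    (hy : IsAbelSolOn a b c d y (eIco t₀ t₁))
    (hnc : Noncontinuable a b c d t₀ τ₀ t₁ y)
    (hy0 : y t₀ ∈ Icc (η t₀) γ) :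
    t₁ = τ₀ ∧ (∀ t ∈ eIco t₀ τ₀, η t ≤ y t ∧ y t ≤ y₁ t) ∧
      (η t₀ < y t₀ → ∀ t ∈ eIco t₀ τ₀, η t < y t) ∧
      (y t₀ < y₁ t₀ → ∀ t ∈ eIco t₀ τ₀, y t < y₁ t) := by
  have hcomp : ∀ t ∈ eIco t₀ t₁, _ := fun t ht =>
    abelSol_comparison ha hb hc hd ha₁ hb₁ hc₁ hd₁ hy₁ hη haneg hint ht₁' hy hy0.1
      (fun s hs => by linarith [hII s ⟨hs.1, hs.2.trans_le ht₁'⟩, hy0.2]) ht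
  obtain rfl := Noncontinuable.eq_of_le_of_le ha hb hc hd (IsAbelSubsolOn.continuousOn hη)
    hy₁.continuousOn ht₁ ht₁' hy hnc fun t ht => (hcomp t ht).1
  exact ⟨rfl, fun t ht => (hcomp t ht).1, fun h t ht => (hcomp t ht).2.1 h,
    fun h t ht => (hcomp t ht).2.2 h⟩

/-- Theorem 3.2: comparison of solutions of (1.1) with a subsolution `η` of (2.8) from
below and a solution `y₁` of (2.1) from above, under condition (I) (`a < 0` a.e., `b²/a`
locally integrable) and the corresponding integral condition. -/
theorem stmt_5 (t₀ : ℝ) (τ₀ : EReal) (hτ : (t₀ : EReal) < τ₀)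
    (a b c d a₁ b₁ c₁ d₁ y₁ η : ℝ → ℝ)
    (ha : ContinuousOn a (eIco t₀ τ₀)) (hb : ContinuousOn b (eIco t₀ τ₀))
    (hc : ContinuousOn c (eIco t₀ τ₀)) (hd : ContinuousOn d (eIco t₀ τ₀))
    (ha₁ : ContinuousOn a₁ (eIco t₀ τ₀)) (hb₁ : ContinuousOn b₁ (eIco t₀ τ₀))
    (hc₁ : ContinuousOn c₁ (eIco t₀ τ₀)) (hd₁ : ContinuousOn d₁ (eIco t₀ τ₀))
    (hy₁ : IsAbelSolOn a₁ b₁ c₁ d₁ y₁ (eIco t₀ τ₀))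
    (hη : ∀ t ∈ eIco t₀ τ₀, ∃ v : ℝ, HasDerivWithinAt η v (eIco t₀ τ₀) t ∧
      v + a t * η t ^ 3 + b t * η t ^ 2 + c t * η t + d t ≤ 0)
    (hη0 : η t₀ ≤ y₁ t₀)
    (haneg : ∀ᵐ t ∂(volume.restrict (eIco t₀ τ₀)), a t < 0)
    (hint : ∀ t : ℝ, t₀ < t → (t : EReal) < τ₀ →
      IntegrableOn (fun s => b s ^ 2 / a s) (Icc t₀ t))
    (γ : ℝ) (hγ : γ ∈ Icc (η t₀) (y₁ t₀))
    (hII : ∀ t ∈ eIco t₀ τ₀,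
      γ - y₁ t₀ + (∫ τ in t₀..t,
        Real.exp (∫ s in t₀..τ, (c s - b s ^ 2 / a s)) *
          ((a₁ τ - a τ) * y₁ τ ^ 3 + (b₁ τ - b τ) * y₁ τ ^ 2 +
            (c₁ τ - c τ) * y₁ τ + (d₁ τ - d τ))) ≤ 0)
    (t₁ : EReal) (y : ℝ → ℝ) (ht₁ : (t₀ : EReal) < t₁) (ht₁' : t₁ ≤ τ₀)
    (hy : IsAbelSolOn a b c d y (eIco t₀ t₁))
    (hnc : Noncontinuable a b c d t₀ τ₀ t₁ y)
    (hy0 : y t₀ ∈ Icc (η t₀) γ) :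
    t₁ = τ₀ ∧ (∀ t ∈ eIco t₀ τ₀, η t ≤ y t ∧ y t ≤ y₁ t) ∧
      (η t₀ < y t₀ → ∀ t ∈ eIco t₀ τ₀, η t < y t) ∧
      (y t₀ < y₁ t₀ → ∀ t ∈ eIco t₀ τ₀, y t < y₁ t) :=
  stmt_5_general t₀ τ₀ a b c d a₁ b₁ c₁ d₁ y₁ η ha hb hc hd ha₁ hb₁ hc₁ hd₁ hy₁ hη haneg hint γ hII
    t₁ y ht₁ ht₁' hy hnc hy0
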